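/- arXiv:2002.12188 — 2 statements merged into one kernel-verified Lean document; each statement's English description precedes it below -/
import Mathlib

section
/- Let d ≥ 5. There exists a constant C ≥ 1 depending only on d such that for every x ∈ ℤ^d, C^{-1}·⟨x⟩^{-d+2} ≤ Σ_{y∈ℤ^d} ⟨y⟩^{-2d+4}·⟨x-y⟩^{-d+2} ≤ C·⟨x⟩^{-d+2}, where ⟨x⟩ = max(2, ‖x‖₁). -/
open scoped BigOperators

/-- `⟨x⟩ = max(2, ‖x‖₁)` for `x ∈ ℤ^d`, as a real number. -/
noncomputable def latticeNorm {d : ℕ} (x : Fin d → ℤ) : ℝ :=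
  max 2 (∑ i, |(x i : ℝ)|)

/-!
Write `e = d - 2`. Since `⟨x⟩ ≤ ⟨y⟩ + ⟨x - y⟩`, one of `⟨y⟩`, `⟨x - y⟩` is at least `⟨x⟩ / 2`,
and the inequality `u² v ≤ w (u² + v²)` for `min u v ≤ w` then gives
`⟨y⟩^{-2e} ⟨x-y⟩^{-e} ≤ 2^e ⟨x⟩^{-e} (⟨y⟩^{-2e} + ⟨x-y⟩^{-2e})`.
Summing over `y` bounds the bubble by `2^{e+1} S ⟨x⟩^{-e}` with `S = Σ_y ⟨y⟩^{-2e}`, which is finite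
because `2e > d`, i.e. `d ≥ 5`: as `∏ᵢ max(2, |yᵢ|) ≤ ⟨y⟩^d`, the sum `S` is dominated by a product
of one-dimensional `p`-series with `p = 2e/d > 1`. The lower bound is the single term `y = 0`.
-/

open Real

theorem summable_fin_prod_of_nonneg {α : Type*} {g : α → ℝ} (hg₀ : 0 ≤ g) (hg : Summable g) :
    ∀ d : ℕ, Summable fun y : Fin d → α => ∏ i, g (y i)
  | 0 => .of_finite
  | d + 1 => by
    have hprod := hg.mul_of_nonneg (summable_fin_prod_of_nonneg hg₀ hg d) hg₀
      fun y => Finset.prod_nonneg fun i _ => hg₀ (y i)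
    refine ((Fin.consEquiv fun _ => α).summable_iff).mp (hprod.congr fun p => ?_)
    simp [Fin.prod_univ_succ]

theorem summable_max_two_abs_int_rpow_neg {b : ℝ} (hb : 1 < b) :
    Summable fun m : ℤ => max 2 |(m : ℝ)| ^ (-b) := by
  refine (summable_abs_int_rpow hb).of_norm_bounded_eventually ?_
  filter_upwards [Set.Finite.compl_mem_cofinite (Set.finite_singleton (0 : ℤ))] with m hm
  have hm : (1 : ℝ) ≤ |(m : ℝ)| := by
    exact_mod_cast Int.one_le_abs (by simpa using hm)
  rw [norm_of_nonneg (by positivity)]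
  exact rpow_le_rpow_of_nonpos (by linarith) (le_max_right _ _) (by linarith)

section LatticeNorm

variable {d : ℕ}

theorem two_le_latticeNorm (x : Fin d → ℤ) : 2 ≤ latticeNorm x := le_max_left _ _

theorem latticeNorm_pos (x : Fin d → ℤ) : 0 < latticeNorm x :=
  two_pos.trans_le (two_le_latticeNorm x)

@[simp]
theorem latticeNorm_zero : latticeNorm (0 : Fin d → ℤ) = 2 := by
  simp [latticeNorm]

theorem latticeNorm_le_add (x y : Fin d → ℤ) :
    latticeNorm x ≤ latticeNorm y + latticeNorm (x - y) := by
  have hsum : ∑ i, |(x i : ℝ)| ≤ ∑ i, |(y i : ℝ)| + ∑ i, |((x - y) i : ℝ)| := by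
    rw [← Finset.sum_add_distrib]
    refine Finset.sum_le_sum fun i _ => ?_
    simpa using abs_add_le (y i : ℝ) (x i - y i)
  refine max_le (by linarith [two_le_latticeNorm y, two_le_latticeNorm (x - y)]) ?_
  exact hsum.trans (add_le_add (le_max_right _ _) (le_max_right _ _))

theorem prod_max_two_abs_le_latticeNorm_pow (y : Fin d → ℤ) :
    ∏ i, max 2 |(y i : ℝ)| ≤ latticeNorm y ^ d := by
  calc ∏ i, max 2 |(y i : ℝ)| ≤ ∏ _i : Fin d, latticeNorm y :=
        Finset.prod_le_prod (fun i _ => by positivity) fun i _ =>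
          max_le_max le_rfl (Finset.single_le_sum (fun j _ => abs_nonneg ((y j : ℤ) : ℝ))
            (Finset.mem_univ i))
    _ = latticeNorm y ^ d := by simp

theorem latticeNorm_rpow_neg_le_prod (hd : 0 < d) (y : Fin d → ℤ) {s : ℝ} (hs : 0 ≤ s) :
    latticeNorm y ^ (-s) ≤ ∏ i, max 2 |(y i : ℝ)| ^ (-(s / d)) := by
  have hd' : (d : ℝ) ≠ 0 := by positivity
  calc latticeNorm y ^ (-s) = (latticeNorm y ^ d) ^ (-(s / d)) := by
        rw [← rpow_natCast, ← rpow_mul (latticeNorm_pos y).le]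
        field_simp
    _ ≤ (∏ i, max 2 |(y i : ℝ)|) ^ (-(s / d)) :=
        rpow_le_rpow_of_nonpos (Finset.prod_pos fun i _ => by positivity)
          (prod_max_two_abs_le_latticeNorm_pow y) (neg_nonpos.mpr (by positivity))
    _ = ∏ i, max 2 |(y i : ℝ)| ^ (-(s / d)) :=
        (finsetProd_rpow _ _ (fun i _ => by positivity) _).symm

theorem summable_latticeNorm_rpow_neg {s : ℝ} (hs : (d : ℝ) < s) :
    Summable fun y : Fin d → ℤ => latticeNorm y ^ (-s) := by
  rcases Nat.eq_zero_or_pos d with rfl | hd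
  · exact .of_finite
  have hb : 1 < s / d := by rwa [one_lt_div (by positivity)]
  refine .of_nonneg_of_le (fun y => rpow_nonneg (latticeNorm_pos y).le _)
    (fun y => latticeNorm_rpow_neg_le_prod hd y ((Nat.cast_nonneg d).trans hs.le))
    (summable_fin_prod_of_nonneg (fun m => by positivity)
      (summable_max_two_abs_int_rpow_neg hb) d)

end LatticeNorm

theorem sq_mul_le_mul_sq_add_sq {u v w : ℝ} (hu : 0 ≤ u) (hv : 0 ≤ v) (h : min u v ≤ w) :
    u ^ 2 * v ≤ w * (u ^ 2 + v ^ 2) := by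
  rcases min_le_iff.mp h with huw | hvw
  · nlinarith [mul_le_mul_of_nonneg_right huw (mul_nonneg hu hv), sq_nonneg (u - v)]
  · nlinarith [mul_le_mul_of_nonneg_left hvw (sq_nonneg u), sq_nonneg v]

theorem rpow_neg_two_mul_mul_rpow_neg_le {a b c s : ℝ} (ha : 0 < a) (hb : 0 < b) (hc : 0 < c)
    (hs : 0 ≤ s) (habc : c ≤ a + b) :
    a ^ (-(2 * s)) * b ^ (-s) ≤ (c / 2) ^ (-s) * (a ^ (-(2 * s)) + b ^ (-(2 * s))) := by
  have hsq : ∀ t : ℝ, 0 < t → t ^ (-(2 * s)) = (t ^ (-s)) ^ 2 := fun t ht => by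
    rw [← rpow_mul_natCast ht.le]
    ring_nf
  rw [hsq a ha, hsq b hb]
  refine sq_mul_le_mul_sq_add_sq (rpow_nonneg ha.le _) (rpow_nonneg hb.le _) ?_
  have hc2 : 0 < c / 2 := half_pos hc
  rcases le_total a b with hab | hba
  · exact min_le_of_right_le (rpow_le_rpow_of_nonpos hc2 (by linarith) (by linarith))
  · exact min_le_of_left_le (rpow_le_rpow_of_nonpos hc2 (by linarith) (by linarith))

noncomputable def latticeBubble {d : ℕ} (s : ℝ) (x : Fin d → ℤ) : ℝ :=
  ∑' y : Fin d → ℤ, latticeNorm y ^ (-(2 * s)) * latticeNorm (x - y) ^ (-s)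

section Bubble

variable {d : ℕ} {s : ℝ}

theorem latticeBubble_term_nonneg (x y : Fin d → ℤ) :
    0 ≤ latticeNorm y ^ (-(2 * s)) * latticeNorm (x - y) ^ (-s) :=
  mul_nonneg (rpow_nonneg (latticeNorm_pos y).le _) (rpow_nonneg (latticeNorm_pos _).le _)

theorem latticeBubble_term_le (hs : 0 ≤ s) (x y : Fin d → ℤ) :
    latticeNorm y ^ (-(2 * s)) * latticeNorm (x - y) ^ (-s) ≤
      (latticeNorm x / 2) ^ (-s) *
        (latticeNorm y ^ (-(2 * s)) + latticeNorm (x - y) ^ (-(2 * s))) :=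
  rpow_neg_two_mul_mul_rpow_neg_le (latticeNorm_pos y) (latticeNorm_pos _) (latticeNorm_pos x) hs
    (latticeNorm_le_add x y)

theorem summable_latticeNorm_sub_rpow_neg (hds : (d : ℝ) < s) (x : Fin d → ℤ) :
    Summable fun y : Fin d → ℤ => latticeNorm (x - y) ^ (-s) :=
  (Equiv.subLeft x).summable_iff.mpr (summable_latticeNorm_rpow_neg hds)

theorem tsum_latticeNorm_sub_rpow_neg (x : Fin d → ℤ) :
    ∑' y : Fin d → ℤ, latticeNorm (x - y) ^ (-s) = ∑' y : Fin d → ℤ, latticeNorm y ^ (-s) :=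
  (Equiv.subLeft x).tsum_eq fun y => latticeNorm y ^ (-s)

theorem summable_latticeBubble_term (hs : 0 ≤ s) (hds : (d : ℝ) < 2 * s) (x : Fin d → ℤ) :
    Summable fun y : Fin d → ℤ => latticeNorm y ^ (-(2 * s)) * latticeNorm (x - y) ^ (-s) :=
  (((summable_latticeNorm_rpow_neg hds).add (summable_latticeNorm_sub_rpow_neg hds x)).mul_left
    _).of_nonneg_of_le (latticeBubble_term_nonneg x) (latticeBubble_term_le hs x)

theorem latticeBubble_le (hs : 0 ≤ s) (hds : (d : ℝ) < 2 * s) (x : Fin d → ℤ) :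
    latticeBubble s x ≤
      2 * 2 ^ s * (∑' y : Fin d → ℤ, latticeNorm y ^ (-(2 * s))) * latticeNorm x ^ (-s) := by
  have hS := summable_latticeNorm_rpow_neg hds
  have hS' := summable_latticeNorm_sub_rpow_neg hds x
  calc latticeBubble s x
      ≤ ∑' y, (latticeNorm x / 2) ^ (-s) *
          (latticeNorm y ^ (-(2 * s)) + latticeNorm (x - y) ^ (-(2 * s))) :=
        (summable_latticeBubble_term hs hds x).tsum_le_tsum (latticeBubble_term_le hs x)
          ((hS.add hS').mul_left _)
    _ = _ := by
        rw [tsum_mul_left, hS.tsum_add hS', tsum_latticeNorm_sub_rpow_neg,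
          div_rpow (latticeNorm_pos x).le zero_le_two, rpow_neg zero_le_two, div_inv_eq_mul]
        ring

theorem le_latticeBubble (hs : 0 ≤ s) (hds : (d : ℝ) < 2 * s) (x : Fin d → ℤ) :
    2 ^ (-(2 * s)) * latticeNorm x ^ (-s) ≤ latticeBubble s x := by
  simpa [latticeBubble] using (summable_latticeBubble_term hs hds x).le_tsum 0 fun y _ =>
    latticeBubble_term_nonneg x y

end Bubble

/-- The bubble-diagram convolution estimate in dimension `d ≥ 5`:
`C⁻¹·⟨x⟩^{-d+2} ≤ Σ_{y∈ℤ^d} ⟨y⟩^{-2d+4}·⟨x-y⟩^{-d+2} ≤ C·⟨x⟩^{-d+2}`. -/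
theorem bubble_estimate_high_dim (d : ℕ) (hd : 5 ≤ d) :
    ∃ C : ℝ, 1 ≤ C ∧ ∀ x : Fin d → ℤ,
      C⁻¹ * latticeNorm x ^ (-(d : ℝ) + 2)
          ≤ (∑' y : Fin d → ℤ,
              latticeNorm y ^ (-2 * (d : ℝ) + 4) *
                latticeNorm (x - y) ^ (-(d : ℝ) + 2)) ∧
      (∑' y : Fin d → ℤ,
          latticeNorm y ^ (-2 * (d : ℝ) + 4) *
            latticeNorm (x - y) ^ (-(d : ℝ) + 2))
          ≤ C * latticeNorm x ^ (-(d : ℝ) + 2) := by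
  have hd' : (5 : ℝ) ≤ d := by exact_mod_cast hd
  have hs : 0 ≤ (d : ℝ) - 2 := by linarith
  have hds : (d : ℝ) < 2 * ((d : ℝ) - 2) := by linarith
  rw [show -2 * (d : ℝ) + 4 = -(2 * ((d : ℝ) - 2)) by ring,
    show -(d : ℝ) + 2 = -((d : ℝ) - 2) by ring]
  set S := ∑' y : Fin d → ℤ, latticeNorm y ^ (-(2 * ((d : ℝ) - 2)))
  have hone : (1 : ℝ) ≤ 2 ^ (2 * ((d : ℝ) - 2)) := one_le_rpow one_le_two (by positivity)
  refine ⟨max (2 ^ (2 * ((d : ℝ) - 2))) (2 * 2 ^ ((d : ℝ) - 2) * S), le_max_of_le_left hone,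
    fun x => ⟨?_, ?_⟩⟩
  · refine le_trans ?_ (le_latticeBubble hs hds x)
    refine mul_le_mul_of_nonneg_right ?_ (rpow_nonneg (latticeNorm_pos x).le _)
    rw [rpow_neg zero_le_two]
    exact inv_anti₀ (by positivity) (le_max_left _ _)
  · exact (latticeBubble_le hs hds x).trans
      (mul_le_mul_of_nonneg_right (le_max_right _ _) (rpow_nonneg (latticeNorm_pos x).le _))
end

section
/- Suppose a sequence (m_k)_{k≥1} of positive reals is log-convex (m_a² ≤ m_{a-i}·m_{a+i} for a ≥ i ≥ 0 with a-i ≥ 1), satisfies m_k ≤ C^k·k!·(k + B)^{k-1} for all k ≥ 1, and m_k ≥ c^k·k!·(k + B)^{k-1} for all k ≥ 1 that are powers of 2, where 0 < c ≤ C and B ≥ 0. Then there exists c' > 0 depending only on c and C such that m_k ≥ (c')^k·k!·(k + B)^{k-1} for all k ≥ 1. -/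
private lemma fact_aux (k : ℕ) : ∀ i : ℕ,
    k.factorial * (k + 2 * i).factorial ≤ 4 ^ i * ((k + i).factorial) ^ 2 := by
  intro i
  induction i with
  | zero => simp [sq]
  | succ n ih =>
    have e : k + 2 * (n + 1) = (k + 2 * n) + 1 + 1 := by ring
    have e2 : k + (n + 1) = (k + n) + 1 := by ring
    rw [e, e2, Nat.factorial_succ, Nat.factorial_succ, Nat.factorial_succ]
    have hfac : (k + 2 * n + 1 + 1) * (k + 2 * n + 1) ≤ 4 * ((k + n + 1) * (k + n + 1)) := by
      nlinarith
    calc k.factorial * ((k + 2 * n + 1 + 1) * ((k + 2 * n + 1) * (k + 2 * n).factorial))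
        = ((k + 2 * n + 1 + 1) * (k + 2 * n + 1)) * (k.factorial * (k + 2 * n).factorial) := by
          ring
      _ ≤ (4 * ((k + n + 1) * (k + n + 1))) * (4 ^ n * ((k + n).factorial) ^ 2) :=
          Nat.mul_le_mul hfac ih
      _ = 4 ^ (n + 1) * ((k + n + 1) * (k + n).factorial) ^ 2 := by ring

/-- Interpolation by log-convexity: if a positive log-convex sequence of
"moments" `m_k` satisfies the upper bound `m_k ≤ C^k·k!·(k+B)^{k-1}` for all
`k ≥ 1` and the matching lower bound `m_k ≥ c^k·k!·(k+B)^{k-1}` along powers of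
2, then a lower bound of the same form holds for all `k ≥ 1`. -/
theorem log_convex_interpolation (m : ℕ → ℝ) (B c C : ℝ)
    (hB : 0 ≤ B) (hc : 0 < c) (hcC : c ≤ C)
    (hpos : ∀ k : ℕ, 1 ≤ k → 0 < m k)
    (hlogconvex : ∀ a i : ℕ, i ≤ a → 1 ≤ a - i → m a ^ 2 ≤ m (a - i) * m (a + i))
    (hupper : ∀ k : ℕ, 1 ≤ k →
      m k ≤ C ^ k * k.factorial * ((k : ℝ) + B) ^ (k - 1))
    (hlower : ∀ ℓ : ℕ,
      c ^ (2 ^ ℓ) * (2 ^ ℓ).factorial * (((2 : ℝ) ^ ℓ : ℝ) + B) ^ (2 ^ ℓ - 1)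
        ≤ m (2 ^ ℓ)) :
    ∃ c' : ℝ, 0 < c' ∧ ∀ k : ℕ, 1 ≤ k →
      c' ^ k * k.factorial * ((k : ℝ) + B) ^ (k - 1) ≤ m k := by
  have hC : 0 < C := lt_of_lt_of_le hc hcC
  refine ⟨c ^ 4 / (32 * C ^ 3), by positivity, ?_⟩
  intro k hk
  -- choose the least power of two `a` with `k ≤ a ≤ 2k`
  set ℓ := Nat.clog 2 k with hℓ
  have hka : k ≤ 2 ^ ℓ := Nat.le_pow_clog one_lt_two k
  have h2k : 2 ^ ℓ ≤ 2 * k := by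
    rcases eq_or_lt_of_le hk with h1 | h1
    · rw [hℓ, ← h1]
      simp [Nat.clog_one_right]
    · have hp : 0 < ℓ := Nat.clog_pos one_lt_two h1
      have hlt : 2 ^ (ℓ - 1) < k := Nat.pow_pred_clog_lt_self one_lt_two h1
      have : 2 ^ ℓ = 2 * 2 ^ (ℓ - 1) := by
        rw [← pow_succ']
        congr 1
        omega
      omega
  obtain ⟨a, ha, hka, h2k⟩ : ∃ a, a = 2 ^ ℓ ∧ k ≤ a ∧ a ≤ 2 * k := ⟨2 ^ ℓ, rfl, hka, h2k⟩
  obtain ⟨i, hak, hik⟩ : ∃ i, a = k + i ∧ i ≤ k := ⟨a - k, by omega, by omega⟩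
  obtain ⟨b, hb⟩ : ∃ b, b = a + i := ⟨a + i, rfl⟩
  have hbk : b = k + 2 * i := by omega
  have ha1 : 1 ≤ a := by omega
  have hb1 : 1 ≤ b := by omega
  have hb3k : b ≤ 3 * k := by omega
  -- log-convexity at midpoint a
  have hma2 : m a ^ 2 ≤ m k * m b := by
    have h := hlogconvex a i (by omega) (by omega)
    rwa [show a - i = k by omega, ← hb] at h
  -- lower bound at a
  have hLa : c ^ a * (a.factorial : ℝ) * ((a : ℝ) + B) ^ (a - 1) ≤ m a := by
    rw [ha]
    push_cast
    exact hlower ℓ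
  have hL0 : (0 : ℝ) ≤ c ^ a * (a.factorial : ℝ) * ((a : ℝ) + B) ^ (a - 1) := by positivity
  have hsq : (c ^ a * (a.factorial : ℝ) * ((a : ℝ) + B) ^ (a - 1)) ^ 2 ≤ m a ^ 2 :=
    pow_le_pow_left₀ hL0 hLa 2
  have hub : m b ≤ C ^ b * b.factorial * ((b : ℝ) + B) ^ (b - 1) := hupper b hb1
  -- the core arithmetic inequality
  have h1 : c ^ (4 * k) * C ^ b ≤ C ^ (3 * k) * c ^ (2 * a) := by
    have e1 : c ^ (4 * k) = c ^ (3 * k - b) * c ^ k * c ^ b := by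
      rw [← pow_add, ← pow_add]; congr 1; omega
    have e2 : C ^ (3 * k) = C ^ (3 * k - b) * C ^ b := by
      rw [← pow_add]; congr 1; omega
    have e3 : c ^ (2 * a) = c ^ k * c ^ b := by
      rw [← pow_add]; congr 1; omega
    rw [e1, e2, e3]
    have hcc : c ^ (3 * k - b) ≤ C ^ (3 * k - b) := pow_le_pow_left₀ hc.le hcC _
    calc c ^ (3 * k - b) * c ^ k * c ^ b * C ^ b
        = c ^ (3 * k - b) * (c ^ k * c ^ b * C ^ b) := by ring
      _ ≤ C ^ (3 * k - b) * (c ^ k * c ^ b * C ^ b) :=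
          mul_le_mul_of_nonneg_right hcc (by positivity)
      _ = C ^ (3 * k - b) * C ^ b * (c ^ k * c ^ b) := by ring

  have h2 : (k.factorial : ℝ) * (b.factorial : ℝ) ≤
      4 ^ k * ((a.factorial : ℝ) * (a.factorial : ℝ)) := by
    have hn : k.factorial * b.factorial ≤ 4 ^ k * (a.factorial * a.factorial) := by
      calc k.factorial * b.factorial = k.factorial * (k + 2 * i).factorial := by rw [hbk]
        _ ≤ 4 ^ i * ((k + i).factorial) ^ 2 := fact_aux k i
        _ ≤ 4 ^ k * (a.factorial * a.factorial) := by
            rw [← hak, sq]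
            exact Nat.mul_le_mul_right _ (Nat.pow_le_pow_right (by norm_num) hik)
    exact_mod_cast hn
  have h3 : ((k : ℝ) + B) ^ (k - 1) * ((b : ℝ) + B) ^ (b - 1) ≤
      8 ^ k * (((a : ℝ) + B) ^ (a - 1) * ((a : ℝ) + B) ^ (a - 1)) := by
    have e3 : (a - 1) + (a - 1) = (k - 1) + (b - 1) := by omega
    have hkaR : ((k : ℝ) + B) ≤ ((a : ℝ) + B) := by
      have : (k : ℝ) ≤ (a : ℝ) := by exact_mod_cast hka
      linarith
    have hb2a : ((b : ℝ) + B) ≤ 2 * ((a : ℝ) + B) := by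
      have : (b : ℝ) ≤ 2 * (a : ℝ) := by exact_mod_cast (by omega : b ≤ 2 * a)
      linarith
    calc ((k : ℝ) + B) ^ (k - 1) * ((b : ℝ) + B) ^ (b - 1)
        ≤ ((a : ℝ) + B) ^ (k - 1) * (2 * ((a : ℝ) + B)) ^ (b - 1) :=
          mul_le_mul (pow_le_pow_left₀ (by positivity) hkaR _)
            (pow_le_pow_left₀ (by positivity) hb2a _) (by positivity) (by positivity)
      _ = 2 ^ (b - 1) * (((a : ℝ) + B) ^ (k - 1) * ((a : ℝ) + B) ^ (b - 1)) := by
          rw [mul_pow]; ring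
      _ ≤ 2 ^ (3 * k) * (((a : ℝ) + B) ^ (k - 1) * ((a : ℝ) + B) ^ (b - 1)) := by
          have h2b : (2 : ℝ) ^ (b - 1) ≤ 2 ^ (3 * k) :=
            pow_le_pow_right₀ one_le_two (by omega)
          exact mul_le_mul_of_nonneg_right h2b (by positivity)
      _ = 8 ^ k * (((a : ℝ) + B) ^ (a - 1) * ((a : ℝ) + B) ^ (a - 1)) := by
          rw [show (8 : ℝ) ^ k = 2 ^ (3 * k) by rw [pow_mul]; norm_num,
            ← pow_add, ← pow_add, e3]
  have core : (c ^ 4 / (32 * C ^ 3)) ^ k * (k.factorial : ℝ) * ((k : ℝ) + B) ^ (k - 1) *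
      (C ^ b * (b.factorial : ℝ) * ((b : ℝ) + B) ^ (b - 1)) ≤
      (c ^ a * (a.factorial : ℝ) * ((a : ℝ) + B) ^ (a - 1)) ^ 2 := by
    have h12 := mul_le_mul h1 h2 (by positivity) (by positivity)
    have h123 := mul_le_mul h12 h3 (by positivity) (by positivity)
    rw [div_pow, div_mul_eq_mul_div, div_mul_eq_mul_div, div_mul_eq_mul_div,
      div_le_iff₀ (by positivity)]
    calc (c ^ 4) ^ k * (k.factorial : ℝ) * ((k : ℝ) + B) ^ (k - 1) *
          (C ^ b * (b.factorial : ℝ) * ((b : ℝ) + B) ^ (b - 1))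
        = (c ^ (4 * k) * C ^ b) * ((k.factorial : ℝ) * (b.factorial : ℝ)) *
          (((k : ℝ) + B) ^ (k - 1) * ((b : ℝ) + B) ^ (b - 1)) := by
          rw [pow_mul]; ring
      _ ≤ (C ^ (3 * k) * c ^ (2 * a)) * (4 ^ k * ((a.factorial : ℝ) * (a.factorial : ℝ))) *
          (8 ^ k * (((a : ℝ) + B) ^ (a - 1) * ((a : ℝ) + B) ^ (a - 1))) := h123
      _ = (c ^ a * (a.factorial : ℝ) * ((a : ℝ) + B) ^ (a - 1)) ^ 2 * (32 * C ^ 3) ^ k := by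
          rw [show ((32 : ℝ) * C ^ 3) ^ k = 4 ^ k * 8 ^ k * (C ^ 3) ^ k by
              rw [show (32 : ℝ) * C ^ 3 = 4 * 8 * C ^ 3 by norm_num, mul_pow, mul_pow],
            show 2 * a = a + a by ring, pow_add, pow_mul]
          ring
  -- put everything together
  have hfinal : (c ^ 4 / (32 * C ^ 3)) ^ k * (k.factorial : ℝ) * ((k : ℝ) + B) ^ (k - 1) *
      m b ≤ m k * m b := by
    calc (c ^ 4 / (32 * C ^ 3)) ^ k * (k.factorial : ℝ) * ((k : ℝ) + B) ^ (k - 1) * m b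
        ≤ (c ^ 4 / (32 * C ^ 3)) ^ k * (k.factorial : ℝ) * ((k : ℝ) + B) ^ (k - 1) *
          (C ^ b * (b.factorial : ℝ) * ((b : ℝ) + B) ^ (b - 1)) :=
          mul_le_mul_of_nonneg_left hub (by positivity)
      _ ≤ (c ^ a * (a.factorial : ℝ) * ((a : ℝ) + B) ^ (a - 1)) ^ 2 := core
      _ ≤ m a ^ 2 := hsq
      _ ≤ m k * m b := hma2
  exact le_of_mul_le_mul_right hfinal (hpos b hb1)
end
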